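/- Let a < b be real numbers and let f_1, f_2 : [a,b] × ℝ × ℝ → ℝ be continuous with continuous partial derivatives f_{1y}, f_{1v}, f_{2y}, f_{2v} with respect to their second and third arguments. Suppose x̃ : [a,b] → ℝ is C¹ with x̃(a) = x_a and x̃(b) = x_b, that the maps t ↦ f_{1v}(t, x̃(t), x̃'(t)) and t ↦ f_{2v}(t, x̃(t), x̃'(t)) are differentiable on [a,b], that F_2[x] ≠ 0 for every C¹ function x with x(a) = x_a and x(b) = x_b, and that x̃ is a weak local extremizer of the quotient functional L[x] = F_1[x] / F_2[x] among such admissible functions: there exists δ > 0 such that L[x̃] ≤ L[x] for every admissible x with ‖x − x̃‖₁ < δ (or L[x̃] ≥ L[x] for all such x). Then, with Q = F_1[x̃] / F_2[x̃], for all t ∈ [a,b]: f_{1y}(t, x̃(t), x̃'(t)) − Q · f_{2y}(t, x̃(t), x̃'(t)) − (d/dt)[ f_{1v}(t, x̃(t), x̃'(t)) − Q · f_{2v}(t, x̃(t), x̃'(t)) ] = 0. -/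

import Mathlib

/-!
Perturbing `xE` to `xE + ε η`, with `η` of class C¹ and vanishing at the endpoints, keeps the
curve admissible and, since `‖ε η‖₁ = |ε| ‖η‖₁`, C¹-close to `xE`; so `ε ↦ L[xE + ε η] = F₁ / F₂`
has a local extremum at `0`. Differentiating under the integral sign, the quotient rule turns this
into `δF₁ - Q δF₂ = 0`, i.e. the weak Euler–Lagrange equation `∫ g η + h η' = 0` with
`g = f₁y - Q f₂y` and `h = f₁v - Q f₂v`. Integrating `g` by parts, `h - ∫ g` is orthogonal to the
derivatives of all such `η`, hence constant (du Bois-Reymond), so `h` is differentiable with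
`h' = g`.
-/

/-- The C¹-norm ‖x‖₁ = sup_{t∈[a,b]} |x(t)| + sup_{t∈[a,b]} |x'(t)|. -/
noncomputable def C1Norm (a b : ℝ) (x : ℝ → ℝ) : ℝ :=
  (⨆ t : Set.Icc a b, |x t|) + (⨆ t : Set.Icc a b, |derivWithin x (Set.Icc a b) t|)

open Set Metric Filter Topology MeasureTheory intervalIntegral

theorem hasDerivAt_comp_line_of_continuous_partials {g gy gv : ℝ → ℝ → ℝ}
    (hy : ∀ y v, HasDerivAt (fun y' => g y' v) (gy y v) y)
    (hv : ∀ y v, HasDerivAt (fun v' => g y v') (gv y v) v)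
    (hyc : Continuous fun p : ℝ × ℝ => gy p.1 p.2)
    (hvc : Continuous fun p : ℝ × ℝ => gv p.1 p.2) (Y V u w ε : ℝ) :
    HasDerivAt (fun ε => g (Y + ε * u) (V + ε * w))
      (gy (Y + ε * u) (V + ε * w) * u + gv (Y + ε * u) (V + ε * w) * w) ε := by
  have hg := hasStrictFDerivAt_uncurry_coprod (f := g) (u := (Y + ε * u, V + ε * w))
    (f₁ := fun y v => (1 : ℝ →L[ℝ] ℝ).smulRight (gy y v))
    (f₂ := fun y v => (1 : ℝ →L[ℝ] ℝ).smulRight (gv y v))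
    (.of_forall fun p => (hy p.1 p.2).hasFDerivAt)
    (.of_forall fun p => (hv p.1 p.2).hasFDerivAt)
    ((ContinuousLinearMap.smulRightL ℝ ℝ ℝ 1).continuous.comp hyc).continuousAt
    ((ContinuousLinearMap.smulRightL ℝ ℝ ℝ 1).continuous.comp hvc).continuousAt
  have hline : HasDerivAt (fun ε => (Y + ε * u, V + ε * w)) (u, w) ε :=
    ((hasDerivAt_mul_const u).const_add Y).prodMk ((hasDerivAt_mul_const w).const_add V)
  refine (hg.hasFDerivAt.comp_hasDerivAt ε hline).congr_deriv ?_
  simp [Function.HasUncurry.uncurry, mul_comm]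

theorem hasDerivAt_intervalIntegral_of_continuousOn {a b x₀ r : ℝ} {F F' : ℝ → ℝ → ℝ}
    (hab : a ≤ b) (hr : 0 < r) (hF : ∀ x ∈ ball x₀ r, ContinuousOn (F x) (Icc a b))
    (hF' : ContinuousOn (Function.uncurry F') (closedBall x₀ r ×ˢ Icc a b))
    (hdiff : ∀ t ∈ Icc a b, ∀ x ∈ ball x₀ r, HasDerivAt (F · t) (F' x t) x) :
    HasDerivAt (fun x => ∫ t in a..b, F x t) (∫ t in a..b, F' x₀ t) x₀ := by
  obtain ⟨C, hC⟩ :=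
    (isCompact_closedBall x₀ r).prod isCompact_Icc |>.exists_bound_of_continuousOn hF'
  have hF'x₀ : ContinuousOn (F' x₀) (Icc a b) := hF'.comp
    (continuousOn_const.prodMk continuousOn_id) fun _ ht => ⟨mem_closedBall_self hr.le, ht⟩
  have hsub : uIoc a b ⊆ Icc a b := by rw [uIoc_of_le hab]; exact Ioc_subset_Icc_self
  refine (hasDerivAt_integral_of_dominated_loc_of_deriv_le (bound := fun _ => C)
    (ball_mem_nhds x₀ hr) ?_ ((hF x₀ (mem_ball_self hr)).intervalIntegrable_of_Icc hab)
    ((hF'x₀.mono hsub).aestronglyMeasurable measurableSet_uIoc)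
    (.of_forall fun t ht x hx => hC (x, t) ⟨ball_subset_closedBall hx, hsub ht⟩)
    intervalIntegrable_const (.of_forall fun t ht x hx => hdiff t (hsub ht) x hx)).2
  filter_upwards [ball_mem_nhds x₀ hr] with x hx
  exact ((hF x hx).mono hsub).aestronglyMeasurable measurableSet_uIoc

theorem ContinuousOn.comp₃ {α : Type*} [TopologicalSpace α] {s : Set α} {S : Set ℝ}
    {g : ℝ → ℝ → ℝ → ℝ}
    (hg : ContinuousOn (fun p : ℝ × ℝ × ℝ => g p.1 p.2.1 p.2.2) (S ×ˢ univ ×ˢ univ))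
    {T Y V : α → ℝ} (hT : ContinuousOn T s) (hY : ContinuousOn Y s) (hV : ContinuousOn V s)
    (hTs : MapsTo T s S) : ContinuousOn (fun q => g (T q) (Y q) (V q)) s :=
  hg.comp (hT.prodMk (hY.prodMk hV)) fun _ hq => ⟨hTs hq, trivial, trivial⟩

theorem ContinuousOn.comp_oneJet {a b : ℝ} {g : ℝ → ℝ → ℝ → ℝ}
    (hg : ContinuousOn (fun p : ℝ × ℝ × ℝ => g p.1 p.2.1 p.2.2) (Icc a b ×ˢ univ ×ˢ univ))
    (hab : a < b) {x : ℝ → ℝ} (hx : ContDiffOn ℝ 1 x (Icc a b)) :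
    ContinuousOn (fun t => g t (x t) (derivWithin x (Icc a b) t)) (Icc a b) :=
  hg.comp₃ continuousOn_id hx.continuousOn
    (hx.continuousOn_derivWithin (uniqueDiffOn_Icc hab) le_rfl) (mapsTo_id _)

structure IsC1Lagrangian (a b : ℝ) (f fy fv : ℝ → ℝ → ℝ → ℝ) : Prop where
  continuousOn : ContinuousOn (fun p : ℝ × ℝ × ℝ => f p.1 p.2.1 p.2.2) (Icc a b ×ˢ univ ×ˢ univ)
  hasDerivAt_fy : ∀ t ∈ Icc a b, ∀ y v, HasDerivAt (fun y' => f t y' v) (fy t y v) y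
  hasDerivAt_fv : ∀ t ∈ Icc a b, ∀ y v, HasDerivAt (fun v' => f t y v') (fv t y v) v
  continuousOn_fy :
    ContinuousOn (fun p : ℝ × ℝ × ℝ => fy p.1 p.2.1 p.2.2) (Icc a b ×ˢ univ ×ˢ univ)
  continuousOn_fv :
    ContinuousOn (fun p : ℝ × ℝ × ℝ => fv p.1 p.2.1 p.2.2) (Icc a b ×ˢ univ ×ˢ univ)

noncomputable def firstVariation (a b : ℝ) (fy fv : ℝ → ℝ → ℝ → ℝ) (x η : ℝ → ℝ) : ℝ :=
  ∫ t in a..b, (fy t (x t) (derivWithin x (Icc a b) t) * η t +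
    fv t (x t) (derivWithin x (Icc a b) t) * derivWithin η (Icc a b) t)

namespace IsC1Lagrangian

variable {a b : ℝ} {f fy fv : ℝ → ℝ → ℝ → ℝ}

theorem hasDerivAt_line (hf : IsC1Lagrangian a b f fy fv) {t : ℝ} (ht : t ∈ Icc a b)
    (Y V u w ε : ℝ) :
    HasDerivAt (fun ε => f t (Y + ε * u) (V + ε * w))
      (fy t (Y + ε * u) (V + ε * w) * u + fv t (Y + ε * u) (V + ε * w) * w) ε := by
  have hslice {g : ℝ → ℝ → ℝ → ℝ}
      (hg : ContinuousOn (fun p : ℝ × ℝ × ℝ => g p.1 p.2.1 p.2.2) (Icc a b ×ˢ univ ×ˢ univ)) :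
      Continuous fun p : ℝ × ℝ => g t p.1 p.2 :=
    continuousOn_univ.mp <| hg.comp₃ continuousOn_const continuousOn_fst continuousOn_snd
      fun _ _ => ht
  exact hasDerivAt_comp_line_of_continuous_partials (hf.hasDerivAt_fy t ht)
    (hf.hasDerivAt_fv t ht) (hslice hf.continuousOn_fy) (hslice hf.continuousOn_fv) Y V u w ε

theorem hasDerivAt_integral_line (hf : IsC1Lagrangian a b f fy fv) (hab : a ≤ b)
    {X P u w : ℝ → ℝ} (hX : ContinuousOn X (Icc a b)) (hP : ContinuousOn P (Icc a b))
    (hu : ContinuousOn u (Icc a b)) (hw : ContinuousOn w (Icc a b)) :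
    HasDerivAt (fun ε => ∫ t in a..b, f t (X t + ε * u t) (P t + ε * w t))
      (∫ t in a..b, (fy t (X t) (P t) * u t + fv t (X t) (P t) * w t)) 0 := by
  have hsnd : MapsTo (Prod.snd : ℝ × ℝ → ℝ) (univ ×ˢ Icc a b) (Icc a b) := fun _ hq => hq.2
  have hcomp {g : ℝ → ℝ → ℝ → ℝ}
      (hg : ContinuousOn (fun p : ℝ × ℝ × ℝ => g p.1 p.2.1 p.2.2) (Icc a b ×ˢ univ ×ˢ univ)) :
      ContinuousOn (fun q : ℝ × ℝ => g q.2 (X q.2 + q.1 * u q.2) (P q.2 + q.1 * w q.2))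
        (univ ×ˢ Icc a b) :=
    hg.comp₃ continuousOn_snd
      ((hX.comp continuousOn_snd hsnd).add (continuousOn_fst.mul (hu.comp continuousOn_snd hsnd)))
      ((hP.comp continuousOn_snd hsnd).add (continuousOn_fst.mul (hw.comp continuousOn_snd hsnd)))
      hsnd
  simpa using hasDerivAt_intervalIntegral_of_continuousOn (x₀ := 0) hab one_pos
    (F' := fun ε t => fy t (X t + ε * u t) (P t + ε * w t) * u t +
      fv t (X t + ε * u t) (P t + ε * w t) * w t)
    (fun ε _ => (hcomp hf.continuousOn).comp (continuousOn_const.prodMk continuousOn_id)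
      fun t ht => ⟨trivial, ht⟩)
    (((hcomp hf.continuousOn_fy).mul (hu.comp continuousOn_snd hsnd)).add
      ((hcomp hf.continuousOn_fv).mul (hw.comp continuousOn_snd hsnd)) |>.mono
        (prod_mono (subset_univ _) subset_rfl))
    fun t ht ε _ => hf.hasDerivAt_line ht (X t) (P t) (u t) (w t) ε

theorem hasDerivAt_firstVariation (hf : IsC1Lagrangian a b f fy fv) (hab : a < b)
    {x η : ℝ → ℝ} (hx : ContDiffOn ℝ 1 x (Icc a b)) (hη : ContDiffOn ℝ 1 η (Icc a b)) :
    HasDerivAt (fun ε => ∫ t in a..b,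
        f t (x t + ε * η t) (derivWithin (fun s => x s + ε * η s) (Icc a b) t))
      (firstVariation a b fy fv x η) 0 := by
  have hI := uniqueDiffOn_Icc hab
  have hderiv (ε : ℝ) {t : ℝ} (ht : t ∈ Icc a b) :
      derivWithin (fun s => x s + ε * η s) (Icc a b) t =
        derivWithin x (Icc a b) t + ε * derivWithin η (Icc a b) t :=
    ((hx.differentiableOn one_ne_zero t ht).hasDerivWithinAt.add
      ((hη.differentiableOn one_ne_zero t ht).hasDerivWithinAt.const_mul ε)).derivWithin (hI t ht)
  refine (hf.hasDerivAt_integral_line hab.le hx.continuousOn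
    (hx.continuousOn_derivWithin hI le_rfl) hη.continuousOn
    (hη.continuousOn_derivWithin hI le_rfl)).congr_of_eventuallyEq
    (.of_forall fun ε => integral_congr fun t ht => ?_)
  rw [uIcc_of_le hab.le] at ht
  simp only [hderiv ε ht]

theorem firstVariation_sub_const_mul {g gy gv : ℝ → ℝ → ℝ → ℝ} (hf : IsC1Lagrangian a b f fy fv)
    (hg : IsC1Lagrangian a b g gy gv) (hab : a < b) {x η : ℝ → ℝ}
    (hx : ContDiffOn ℝ 1 x (Icc a b)) (hη : ContDiffOn ℝ 1 η (Icc a b)) (c : ℝ) :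
    firstVariation a b (fun t y v => fy t y v - c * gy t y v)
        (fun t y v => fv t y v - c * gv t y v) x η =
      firstVariation a b fy fv x η - c * firstVariation a b gy gv x η := by
  have hη' := hη.continuousOn_derivWithin (uniqueDiffOn_Icc hab) le_rfl
  have hint {k ky kv : ℝ → ℝ → ℝ → ℝ} (hk : IsC1Lagrangian a b k ky kv) :
      IntervalIntegrable (fun t => ky t (x t) (derivWithin x (Icc a b) t) * η t +
        kv t (x t) (derivWithin x (Icc a b) t) * derivWithin η (Icc a b) t) volume a b :=
    (((hk.continuousOn_fy.comp_oneJet hab hx).mul hη.continuousOn).add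
      ((hk.continuousOn_fv.comp_oneJet hab hx).mul hη')).intervalIntegrable_of_Icc hab.le
  rw [firstVariation, firstVariation, firstVariation, ← intervalIntegral.integral_const_mul,
    ← integral_sub (hint hf) ((hint hg).const_mul c)]
  exact integral_congr fun t _ => by ring

end IsC1Lagrangian

theorem IsLocalExtr.sub_div_mul_eq_zero_of_hasDerivAt {N D : ℝ → ℝ} {N' D' x₀ : ℝ}
    (hext : IsLocalExtr (fun x => N x / D x) x₀) (hN : HasDerivAt N N' x₀)
    (hD : HasDerivAt D D' x₀) (hD₀ : D x₀ ≠ 0) : N' - N x₀ / D x₀ * D' = 0 := by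
  have h := hext.hasDerivAt_eq_zero (hN.div hD hD₀)
  field_simp at h ⊢
  linarith

theorem C1Norm_const_mul (a b c : ℝ) (η : ℝ → ℝ) :
    C1Norm a b (fun t => c * η t) = |c| * C1Norm a b η := by
  have hd (t : ℝ) : derivWithin (fun t => c * η t) (Icc a b) t = c * derivWithin η (Icc a b) t :=
    derivWithin_fun_const_smul_field c η
  simp only [C1Norm, hd, abs_mul, mul_add, Real.mul_iSup_of_nonneg (abs_nonneg c)]

theorem eventually_C1Norm_const_mul_lt (a b : ℝ) (η : ℝ → ℝ) {δ : ℝ} (hδ : 0 < δ) :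
    ∀ᶠ ε in 𝓝 (0 : ℝ), C1Norm a b (fun t => ε * η t) < δ := by
  have h : Tendsto (fun ε : ℝ => |ε| * C1Norm a b η) (𝓝 0) (𝓝 0) := by
    simpa using (continuous_abs.fun_mul continuous_const).tendsto (0 : ℝ)
  simpa only [C1Norm_const_mul] using h.eventually (eventually_lt_nhds hδ)

def IsWeakLocalExtr (a b xa xb : ℝ) (L : (ℝ → ℝ) → ℝ) (xE : ℝ → ℝ) : Prop :=
  (∃ δ > 0, ∀ x : ℝ → ℝ, ContDiffOn ℝ 1 x (Icc a b) → x a = xa → x b = xb →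
      C1Norm a b (fun t => x t - xE t) < δ → L xE ≤ L x) ∨
    (∃ δ > 0, ∀ x : ℝ → ℝ, ContDiffOn ℝ 1 x (Icc a b) → x a = xa → x b = xb →
      C1Norm a b (fun t => x t - xE t) < δ → L x ≤ L xE)

theorem IsWeakLocalExtr.isLocalExtr_line {a b xa xb : ℝ} {L : (ℝ → ℝ) → ℝ} {xE η : ℝ → ℝ}
    (hext : IsWeakLocalExtr a b xa xb L xE) (hxE : ContDiffOn ℝ 1 xE (Icc a b))
    (hxEa : xE a = xa) (hxEb : xE b = xb) (hη : ContDiffOn ℝ 1 η (Icc a b))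
    (hηa : η a = 0) (hηb : η b = 0) :
    IsLocalExtr (fun ε => L (fun t => xE t + ε * η t)) 0 := by
  have hnear {δ : ℝ} (hδ : 0 < δ) : ∀ᶠ ε in 𝓝 (0 : ℝ),
      ContDiffOn ℝ 1 (fun t => xE t + ε * η t) (Icc a b) ∧ xE a + ε * η a = xa ∧
        xE b + ε * η b = xb ∧ C1Norm a b (fun t => (xE t + ε * η t) - xE t) < δ := by
    filter_upwards [eventually_C1Norm_const_mul_lt a b η hδ] with ε hε
    exact ⟨hxE.add (contDiffOn_const.mul hη), by simp [hxEa, hηa], by simp [hxEb, hηb],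
      by simpa using hε⟩
  rcases hext with ⟨δ, hδ, hmin⟩ | ⟨δ, hδ, hmax⟩
  · exact .inl <| (hnear hδ).mono fun ε ⟨hC1, ha, hb, hclose⟩ => by
      simpa using hmin _ hC1 ha hb hclose
  · exact .inr <| (hnear hδ).mono fun ε ⟨hC1, ha, hb, hclose⟩ => by
      simpa using hmax _ hC1 ha hb hclose

section DuBoisReymond

variable {a b : ℝ}

theorem hasDerivWithinAt_integral_Icc {g : ℝ → ℝ} (hg : ContinuousOn g (Icc a b)) {t : ℝ}
    (ht : t ∈ Icc a b) : HasDerivWithinAt (fun x => ∫ s in a..x, g s) (g t) (Icc a b) t := by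
  have : Fact (t ∈ Icc a b) := ⟨ht⟩
  exact integral_hasDerivWithinAt_right
    ((hg.mono (Icc_subset_Icc_right ht.2)).intervalIntegrable_of_Icc ht.1)
    ⟨Icc a b, self_mem_nhdsWithin, hg.aestronglyMeasurable measurableSet_Icc⟩ (hg t ht)

theorem contDiffOn_one_integral_Icc (hab : a < b) {g : ℝ → ℝ} (hg : ContinuousOn g (Icc a b)) :
    ContDiffOn ℝ 1 (fun x => ∫ s in a..x, g s) (Icc a b) := by
  have hd (t : ℝ) (ht : t ∈ Icc a b) := hasDerivWithinAt_integral_Icc hg ht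
  rw [contDiffOn_one_iff_derivWithin (uniqueDiffOn_Icc hab)]
  exact ⟨fun t ht => (hd t ht).differentiableWithinAt,
    hg.congr fun t ht => (hd t ht).derivWithin (uniqueDiffOn_Icc hab t ht)⟩

theorem eqOn_zero_of_integral_sq_eq_zero (hab : a < b) {φ : ℝ → ℝ}
    (hφ : ContinuousOn φ (Icc a b)) (h : ∫ t in a..b, φ t ^ 2 = 0) : EqOn φ 0 (Icc a b) := by
  intro t ht
  by_contra hne
  have hpos := integral_lt_integral_of_continuousOn_of_le_of_exists_lt hab continuousOn_const
    (hφ.pow 2) (fun x _ => sq_nonneg (φ x))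
    ⟨t, ht, lt_of_le_of_ne (sq_nonneg _) (Ne.symm (pow_ne_zero 2 hne))⟩
  simp [h] at hpos

theorem eqOn_const_of_integral_mul_derivWithin_eq_zero (hab : a < b) {φ : ℝ → ℝ}
    (hφ : ContinuousOn φ (Icc a b))
    (h : ∀ η : ℝ → ℝ, ContDiffOn ℝ 1 η (Icc a b) → η a = 0 → η b = 0 →
      ∫ t in a..b, φ t * derivWithin η (Icc a b) t = 0) :
    ∃ c, EqOn φ (fun _ => c) (Icc a b) := by
  set c := (∫ t in a..b, φ t) / (b - a)
  have hφc : ContinuousOn (fun t => φ t - c) (Icc a b) := hφ.sub continuousOn_const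
  have hmean : ∫ t in a..b, (φ t - c) = 0 := by
    rw [integral_sub (hφ.intervalIntegrable_of_Icc hab.le) intervalIntegrable_const,
      intervalIntegral.integral_const, smul_eq_mul, mul_div_cancel₀ _ (sub_ne_zero.mpr hab.ne'),
      sub_self]
  -- test against `η₀ x = ∫ s in a..x, (φ s - c)`, which vanishes at `b` because `c` is the mean
  have hη₀ : ∫ t in a..b, φ t * (φ t - c) = 0 := by
    rw [← h _ (contDiffOn_one_integral_Icc hab hφc) integral_same hmean]
    refine integral_congr fun t ht => ?_
    rw [uIcc_of_le hab.le] at ht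
    simp only [(hasDerivWithinAt_integral_Icc hφc ht).derivWithin (uniqueDiffOn_Icc hab t ht)]
  have hsq : ∫ t in a..b, (φ t - c) ^ 2 = 0 := by
    calc ∫ t in a..b, (φ t - c) ^ 2 = ∫ t in a..b, (φ t * (φ t - c) - c * (φ t - c)) :=
          integral_congr fun t _ => by ring
      _ = 0 := by
        rw [integral_sub ((hφ.fun_mul hφc).intervalIntegrable_of_Icc hab.le)
          ((continuousOn_const.fun_mul hφc).intervalIntegrable_of_Icc hab.le),
          intervalIntegral.integral_const_mul, hη₀, hmean, mul_zero, sub_zero]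
  exact ⟨c, fun t ht => sub_eq_zero.mp (eqOn_zero_of_integral_sq_eq_zero hab hφc hsq ht)⟩

theorem hasDerivWithinAt_of_integral_mul_add_mul_derivWithin_eq_zero (hab : a < b)
    {g h : ℝ → ℝ} (hg : ContinuousOn g (Icc a b)) (hh : ContinuousOn h (Icc a b))
    (hweak : ∀ η : ℝ → ℝ, ContDiffOn ℝ 1 η (Icc a b) → η a = 0 → η b = 0 →
      ∫ t in a..b, (g t * η t + h t * derivWithin η (Icc a b) t) = 0)
    {t : ℝ} (ht : t ∈ Icc a b) : HasDerivWithinAt h (g t) (Icc a b) t := by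
  set G := fun x => ∫ s in a..x, g s
  have hG (t : ℝ) (ht : t ∈ Icc a b) : HasDerivWithinAt G (g t) (Icc a b) t :=
    hasDerivWithinAt_integral_Icc hg ht
  have hGc : ContinuousOn G (Icc a b) := fun t ht => (hG t ht).continuousWithinAt
  obtain ⟨c, hc⟩ := eqOn_const_of_integral_mul_derivWithin_eq_zero hab (hh.sub hGc)
    fun η hη hηa hηb => by
      have hηd (t : ℝ) (ht : t ∈ Icc a b) :
          HasDerivWithinAt η (derivWithin η (Icc a b) t) (Icc a b) t :=
        (hη.differentiableOn one_ne_zero t ht).hasDerivWithinAt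
      have hη' := hη.continuousOn_derivWithin (uniqueDiffOn_Icc hab) le_rfl
      have hint {k : ℝ → ℝ} (hk : ContinuousOn k (Icc a b)) :
          IntervalIntegrable (fun t => g t * η t + k t * derivWithin η (Icc a b) t) volume a b :=
        ((hg.fun_mul hη.continuousOn).fun_add (hk.fun_mul hη')).intervalIntegrable_of_Icc hab.le
      have hparts : ∫ t in a..b, (g t * η t + G t * derivWithin η (Icc a b) t) = 0 := by
        rw [integral_deriv_mul_eq_sub_of_hasDerivWithinAt (by rwa [uIcc_of_le hab.le])
          (by rwa [uIcc_of_le hab.le]) (hg.intervalIntegrable_of_Icc hab.le)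
          (hη'.intervalIntegrable_of_Icc hab.le), hηa, hηb, mul_zero, mul_zero, sub_zero]
      calc ∫ t in a..b, (h t - G t) * derivWithin η (Icc a b) t
          = (∫ t in a..b, (g t * η t + h t * derivWithin η (Icc a b) t)) -
              ∫ t in a..b, (g t * η t + G t * derivWithin η (Icc a b) t) := by
            rw [← integral_sub (hint hh) (hint hGc)]
            exact integral_congr fun t _ => by ring
        _ = 0 := by rw [hweak η hη hηa hηb, hparts, sub_zero]
  exact ((hG t ht).add_const c).congr_of_mem (fun s hs => eq_add_of_sub_eq' (hc hs)) ht

end DuBoisReymond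

theorem quotient_euler_lagrange_general
    (a b : ℝ) (hab : a < b)
    (f1 f1y f1v f2 f2y f2v : ℝ → ℝ → ℝ → ℝ)
    (hf1_cont : ContinuousOn (fun p : ℝ × ℝ × ℝ => f1 p.1 p.2.1 p.2.2)
      (Set.Icc a b ×ˢ (Set.univ : Set ℝ) ×ˢ (Set.univ : Set ℝ)))
    (hf2_cont : ContinuousOn (fun p : ℝ × ℝ × ℝ => f2 p.1 p.2.1 p.2.2)
      (Set.Icc a b ×ˢ (Set.univ : Set ℝ) ×ˢ (Set.univ : Set ℝ)))
    (hf1y : ∀ t ∈ Set.Icc a b, ∀ y v : ℝ,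
      HasDerivAt (fun y' => f1 t y' v) (f1y t y v) y)
    (hf1v : ∀ t ∈ Set.Icc a b, ∀ y v : ℝ,
      HasDerivAt (fun v' => f1 t y v') (f1v t y v) v)
    (hf2y : ∀ t ∈ Set.Icc a b, ∀ y v : ℝ,
      HasDerivAt (fun y' => f2 t y' v) (f2y t y v) y)
    (hf2v : ∀ t ∈ Set.Icc a b, ∀ y v : ℝ,
      HasDerivAt (fun v' => f2 t y v') (f2v t y v) v)
    (hf1y_cont : ContinuousOn (fun p : ℝ × ℝ × ℝ => f1y p.1 p.2.1 p.2.2)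
      (Set.Icc a b ×ˢ (Set.univ : Set ℝ) ×ˢ (Set.univ : Set ℝ)))
    (hf1v_cont : ContinuousOn (fun p : ℝ × ℝ × ℝ => f1v p.1 p.2.1 p.2.2)
      (Set.Icc a b ×ˢ (Set.univ : Set ℝ) ×ˢ (Set.univ : Set ℝ)))
    (hf2y_cont : ContinuousOn (fun p : ℝ × ℝ × ℝ => f2y p.1 p.2.1 p.2.2)
      (Set.Icc a b ×ˢ (Set.univ : Set ℝ) ×ˢ (Set.univ : Set ℝ)))
    (hf2v_cont : ContinuousOn (fun p : ℝ × ℝ × ℝ => f2v p.1 p.2.1 p.2.2)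
      (Set.Icc a b ×ˢ (Set.univ : Set ℝ) ×ˢ (Set.univ : Set ℝ)))
    (xa xb : ℝ) (xE : ℝ → ℝ)
    (hxE : ContDiffOn ℝ 1 xE (Set.Icc a b))
    (hxEa : xE a = xa) (hxEb : xE b = xb)
    (F1 F2 : (ℝ → ℝ) → ℝ)
    (hF1 : ∀ x, F1 x = ∫ t in a..b, f1 t (x t) (derivWithin x (Set.Icc a b) t))
    (hF2 : ∀ x, F2 x = ∫ t in a..b, f2 t (x t) (derivWithin x (Set.Icc a b) t))
    (hF2ne : ∀ x : ℝ → ℝ, ContDiffOn ℝ 1 x (Set.Icc a b) →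
      x a = xa → x b = xb → F2 x ≠ 0)
    (L : (ℝ → ℝ) → ℝ)
    (hL : ∀ x, L x = F1 x / F2 x)
    (hext :
      (∃ δ > 0, ∀ x : ℝ → ℝ, ContDiffOn ℝ 1 x (Set.Icc a b) →
        x a = xa → x b = xb → C1Norm a b (fun t => x t - xE t) < δ → L xE ≤ L x) ∨
      (∃ δ > 0, ∀ x : ℝ → ℝ, ContDiffOn ℝ 1 x (Set.Icc a b) →
        x a = xa → x b = xb → C1Norm a b (fun t => x t - xE t) < δ → L x ≤ L xE)) :
    ∀ t ∈ Set.Icc a b,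
      f1y t (xE t) (derivWithin xE (Set.Icc a b) t) -
        (F1 xE / F2 xE) * f2y t (xE t) (derivWithin xE (Set.Icc a b) t) -
        derivWithin (fun s => f1v s (xE s) (derivWithin xE (Set.Icc a b) s) -
            (F1 xE / F2 xE) * f2v s (xE s) (derivWithin xE (Set.Icc a b) s))
          (Set.Icc a b) t = 0 := by
  have hf1 : IsC1Lagrangian a b f1 f1y f1v := ⟨hf1_cont, hf1y, hf1v, hf1y_cont, hf1v_cont⟩
  have hf2 : IsC1Lagrangian a b f2 f2y f2v := ⟨hf2_cont, hf2y, hf2v, hf2y_cont, hf2v_cont⟩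
  set Q := F1 xE / F2 xE
  have hweak (η : ℝ → ℝ) (hη : ContDiffOn ℝ 1 η (Icc a b)) (hηa : η a = 0) (hηb : η b = 0) :
      firstVariation a b (fun t y v => f1y t y v - Q * f2y t y v)
        (fun t y v => f1v t y v - Q * f2v t y v) xE η = 0 := by
    have hN : HasDerivAt (fun ε => F1 fun t => xE t + ε * η t)
        (firstVariation a b f1y f1v xE η) 0 := by
      simpa only [hF1] using hf1.hasDerivAt_firstVariation hab hxE hη
    have hD : HasDerivAt (fun ε => F2 fun t => xE t + ε * η t)
        (firstVariation a b f2y f2v xE η) 0 := by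
      simpa only [hF2] using hf2.hasDerivAt_firstVariation hab hxE hη
    have hextr : IsLocalExtr (fun ε => (F1 fun t => xE t + ε * η t) /
        F2 fun t => xE t + ε * η t) 0 := by
      simpa only [hL] using IsWeakLocalExtr.isLocalExtr_line hext hxE hxEa hxEb hη hηa hηb
    have hcrit := hextr.sub_div_mul_eq_zero_of_hasDerivAt hN hD
      (by simpa using hF2ne xE hxE hxEa hxEb)
    simpa only [hf1.firstVariation_sub_const_mul hf2 hab hxE hη, zero_mul, add_zero] using hcrit
  intro t ht
  have hderiv := hasDerivWithinAt_of_integral_mul_add_mul_derivWithin_eq_zero hab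
    ((hf1.continuousOn_fy.comp_oneJet hab hxE).fun_sub
      (continuousOn_const.fun_mul (hf2.continuousOn_fy.comp_oneJet hab hxE)))
    ((hf1.continuousOn_fv.comp_oneJet hab hxE).fun_sub
      (continuousOn_const.fun_mul (hf2.continuousOn_fv.comp_oneJet hab hxE)))
    hweak ht
  rw [hderiv.derivWithin (uniqueDiffOn_Icc hab t ht), sub_self]

/-- Euler–Lagrange equation for the quotient functional
`L[x] = F₁[x] / F₂[x]` with both endpoints fixed. -/
theorem quotient_euler_lagrange
    (a b : ℝ) (hab : a < b)
    (f1 f1y f1v f2 f2y f2v : ℝ → ℝ → ℝ → ℝ)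
    (hf1_cont : ContinuousOn (fun p : ℝ × ℝ × ℝ => f1 p.1 p.2.1 p.2.2)
      (Set.Icc a b ×ˢ (Set.univ : Set ℝ) ×ˢ (Set.univ : Set ℝ)))
    (hf2_cont : ContinuousOn (fun p : ℝ × ℝ × ℝ => f2 p.1 p.2.1 p.2.2)
      (Set.Icc a b ×ˢ (Set.univ : Set ℝ) ×ˢ (Set.univ : Set ℝ)))
    (hf1y : ∀ t ∈ Set.Icc a b, ∀ y v : ℝ,
      HasDerivAt (fun y' => f1 t y' v) (f1y t y v) y)
    (hf1v : ∀ t ∈ Set.Icc a b, ∀ y v : ℝ,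
      HasDerivAt (fun v' => f1 t y v') (f1v t y v) v)
    (hf2y : ∀ t ∈ Set.Icc a b, ∀ y v : ℝ,
      HasDerivAt (fun y' => f2 t y' v) (f2y t y v) y)
    (hf2v : ∀ t ∈ Set.Icc a b, ∀ y v : ℝ,
      HasDerivAt (fun v' => f2 t y v') (f2v t y v) v)
    (hf1y_cont : ContinuousOn (fun p : ℝ × ℝ × ℝ => f1y p.1 p.2.1 p.2.2)
      (Set.Icc a b ×ˢ (Set.univ : Set ℝ) ×ˢ (Set.univ : Set ℝ)))
    (hf1v_cont : ContinuousOn (fun p : ℝ × ℝ × ℝ => f1v p.1 p.2.1 p.2.2)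
      (Set.Icc a b ×ˢ (Set.univ : Set ℝ) ×ˢ (Set.univ : Set ℝ)))
    (hf2y_cont : ContinuousOn (fun p : ℝ × ℝ × ℝ => f2y p.1 p.2.1 p.2.2)
      (Set.Icc a b ×ˢ (Set.univ : Set ℝ) ×ˢ (Set.univ : Set ℝ)))
    (hf2v_cont : ContinuousOn (fun p : ℝ × ℝ × ℝ => f2v p.1 p.2.1 p.2.2)
      (Set.Icc a b ×ˢ (Set.univ : Set ℝ) ×ˢ (Set.univ : Set ℝ)))
    (xa xb : ℝ) (xE : ℝ → ℝ)
    (hxE : ContDiffOn ℝ 1 xE (Set.Icc a b))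
    (hxEa : xE a = xa) (hxEb : xE b = xb)
    (hdiff1 : ∀ t ∈ Set.Icc a b,
      DifferentiableWithinAt ℝ
        (fun s => f1v s (xE s) (derivWithin xE (Set.Icc a b) s)) (Set.Icc a b) t)
    (hdiff2 : ∀ t ∈ Set.Icc a b,
      DifferentiableWithinAt ℝ
        (fun s => f2v s (xE s) (derivWithin xE (Set.Icc a b) s)) (Set.Icc a b) t)
    (F1 F2 : (ℝ → ℝ) → ℝ)
    (hF1 : ∀ x, F1 x = ∫ t in a..b, f1 t (x t) (derivWithin x (Set.Icc a b) t))
    (hF2 : ∀ x, F2 x = ∫ t in a..b, f2 t (x t) (derivWithin x (Set.Icc a b) t))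
    (hF2ne : ∀ x : ℝ → ℝ, ContDiffOn ℝ 1 x (Set.Icc a b) →
      x a = xa → x b = xb → F2 x ≠ 0)
    (L : (ℝ → ℝ) → ℝ)
    (hL : ∀ x, L x = F1 x / F2 x)
    (hext :
      (∃ δ > 0, ∀ x : ℝ → ℝ, ContDiffOn ℝ 1 x (Set.Icc a b) →
        x a = xa → x b = xb → C1Norm a b (fun t => x t - xE t) < δ → L xE ≤ L x) ∨
      (∃ δ > 0, ∀ x : ℝ → ℝ, ContDiffOn ℝ 1 x (Set.Icc a b) →
        x a = xa → x b = xb → C1Norm a b (fun t => x t - xE t) < δ → L x ≤ L xE)) :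
    ∀ t ∈ Set.Icc a b,
      f1y t (xE t) (derivWithin xE (Set.Icc a b) t) -
        (F1 xE / F2 xE) * f2y t (xE t) (derivWithin xE (Set.Icc a b) t) -
        derivWithin (fun s => f1v s (xE s) (derivWithin xE (Set.Icc a b) s) -
            (F1 xE / F2 xE) * f2v s (xE s) (derivWithin xE (Set.Icc a b) s))
          (Set.Icc a b) t = 0 :=
  quotient_euler_lagrange_general a b hab f1 f1y f1v f2 f2y f2v hf1_cont hf2_cont hf1y hf1v hf2y
    hf2v hf1y_cont hf1v_cont hf2y_cont hf2v_cont xa xb xE hxE hxEa hxEb F1 F2 hF1 hF2 hF2ne L hL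
    hext
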